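/- Let E be a finite-dimensional real normed vector space, U ⊆ E an open set, τ a smooth (C^∞) one-form on U, and X, Y smooth vector fields on U. Assume that for every x ∈ U the alternating 3-form (τ ∧ dτ)_x := τ_x ∧ (dτ)_x satisfies (τ ∧ dτ)_x ≠ 0, ι_{X(x)}((τ ∧ dτ)_x) = 0 and ι_{Y(x)}((τ ∧ dτ)_x) = 0. Then for every x ∈ U: τ_x([X, Y](x)) = 0 and ι_{[X,Y](x)}((τ ∧ dτ)_x) = 0. -/

import Mathlib

namespace SDSugra

variable {E : Type*} [NormedAddCommGroup E] [NormedSpace ℝ E]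

/-- The exterior derivative of the one-form `τ` at `x`:
`(dτ)_x (u, v) = (Dτ(x) u)(v) − (Dτ(x) v)(u)`. -/
noncomputable def dOne (τ : E → E →L[ℝ] ℝ) (x u v : E) : ℝ :=
  fderiv ℝ τ x u v - fderiv ℝ τ x v u

/-- The 3-form `(τ ∧ dτ)_x` evaluated at `(u, v, w)`. -/
noncomputable def tdt (τ : E → E →L[ℝ] ℝ) (x u v w : E) : ℝ :=
  τ x u * dOne τ x v w - τ x v * dOne τ x u w + τ x w * dOne τ x u v

/-- The Lie bracket of vector fields, `[X, Y](x) = DY(x)(X(x)) − DX(x)(Y(x))`. -/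
noncomputable def lieB (X Y : E → E) (x : E) : E :=
  fderiv ℝ Y x (X x) - fderiv ℝ X x (Y x)

/-- Derivative of `y ↦ τ y (Z y)` when this function vanishes near `x`. -/
lemma tau_deriv {τ : E → E →L[ℝ] ℝ} {Z : E → E} {x : E}
    {T : E →L[ℝ] E →L[ℝ] ℝ} {DZ : E →L[ℝ] E}
    (hT : HasFDerivAt τ T x) (hZ : HasFDerivAt Z DZ x)
    (hvan : ∀ᶠ y in nhds x, τ y (Z y) = 0) (s : E) :
    T s (Z x) + τ x (DZ s) = 0 := by
  have hd := hT.clm_apply hZ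
  have h0 := hd.unique ((hasFDerivAt_const (0:ℝ) x).congr_of_eventuallyEq ?_)
  · have hs := congrFun (congrArg DFunLike.coe h0) s
    simp only [ContinuousLinearMap.add_apply, ContinuousLinearMap.coe_comp',
      Function.comp_apply, ContinuousLinearMap.flip_apply,
      ContinuousLinearMap.zero_apply] at hs
    linarith [hs]
  · filter_upwards [hvan] with y hy using hy

/-- Derivative of `y ↦ tdt τ y (Z y) v w` when this function vanishes near `x`. -/
lemma phi_deriv {τ : E → E →L[ℝ] ℝ} {Z : E → E} {x : E}
    {T : E →L[ℝ] E →L[ℝ] ℝ} {S : E →L[ℝ] E →L[ℝ] E →L[ℝ] ℝ} {DZ : E →L[ℝ] E}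
    (hT : HasFDerivAt τ T x) (hS : HasFDerivAt (fderiv ℝ τ) S x)
    (hZ : HasFDerivAt Z DZ x) (v w : E)
    (hvan : ∀ᶠ y in nhds x, tdt τ y (Z y) v w = 0) (s : E) :
    (T s (Z x) + τ x (DZ s)) * dOne τ x v w + τ x (Z x) * (S s v w - S s w v)
      - T s v * dOne τ x (Z x) w
      - τ x v * (S s (Z x) w + T (DZ s) w - S s w (Z x) - T w (DZ s))
      + T s w * dOne τ x (Z x) v
      + τ x w * (S s (Z x) v + T (DZ s) v - S s v (Z x) - T v (DZ s)) = 0 := by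
  have hd := (((hT.clm_apply hZ).mul
      (((hS.clm_apply (hasFDerivAt_const v x)).clm_apply (hasFDerivAt_const w x)).sub
        ((hS.clm_apply (hasFDerivAt_const w x)).clm_apply (hasFDerivAt_const v x)))).sub
      ((hT.clm_apply (hasFDerivAt_const v x)).mul
      (((hS.clm_apply hZ).clm_apply (hasFDerivAt_const w x)).sub
        ((hS.clm_apply (hasFDerivAt_const w x)).clm_apply hZ)))).add
      ((hT.clm_apply (hasFDerivAt_const w x)).mul
      (((hS.clm_apply hZ).clm_apply (hasFDerivAt_const v x)).sub
        ((hS.clm_apply (hasFDerivAt_const v x)).clm_apply hZ)))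
  have h0 := hd.unique ((hasFDerivAt_const (0:ℝ) x).congr_of_eventuallyEq ?_)
  · have hs := congrFun (congrArg DFunLike.coe h0) s
    simp only [ContinuousLinearMap.add_apply, ContinuousLinearMap.coe_sub',
      ContinuousLinearMap.coe_comp', Function.comp_apply, ContinuousLinearMap.flip_apply,
      ContinuousLinearMap.smul_apply, smul_eq_mul, Pi.sub_apply,
      ContinuousLinearMap.zero_apply, ContinuousLinearMap.coe_smul', Pi.smul_apply,
      ContinuousLinearMap.sub_apply, map_zero] at hs
    rw [hT.fderiv] at hs
    simp only [dOne, hT.fderiv]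
    linear_combination hs
  · filter_upwards [hvan] with y hy
    simpa [tdt, dOne] using hy

/-- Derivative of `y ↦ tdt τ y (X y) (Y y) w` when this function vanishes near `x`. -/
lemma theta_deriv {τ : E → E →L[ℝ] ℝ} {X Y : E → E} {x : E}
    {T : E →L[ℝ] E →L[ℝ] ℝ} {S : E →L[ℝ] E →L[ℝ] E →L[ℝ] ℝ} {DX DY : E →L[ℝ] E}
    (hT : HasFDerivAt τ T x) (hS : HasFDerivAt (fderiv ℝ τ) S x)
    (hXd : HasFDerivAt X DX x) (hYd : HasFDerivAt Y DY x) (w : E)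
    (hvan : ∀ᶠ y in nhds x, tdt τ y (X y) (Y y) w = 0) (s : E) :
    (T s (X x) + τ x (DX s)) * dOne τ x (Y x) w
      + τ x (X x) * (S s (Y x) w + T (DY s) w - S s w (Y x) - T w (DY s))
      - (T s (Y x) + τ x (DY s)) * dOne τ x (X x) w
      - τ x (Y x) * (S s (X x) w + T (DX s) w - S s w (X x) - T w (DX s))
      + T s w * dOne τ x (X x) (Y x)
      + τ x w * (S s (X x) (Y x) + T (DX s) (Y x) + T (X x) (DY s)
          - S s (Y x) (X x) - T (DY s) (X x) - T (Y x) (DX s)) = 0 := by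
  have hd := (((hT.clm_apply hXd).mul
      (((hS.clm_apply hYd).clm_apply (hasFDerivAt_const w x)).sub
        ((hS.clm_apply (hasFDerivAt_const w x)).clm_apply hYd))).sub
      ((hT.clm_apply hYd).mul
      (((hS.clm_apply hXd).clm_apply (hasFDerivAt_const w x)).sub
        ((hS.clm_apply (hasFDerivAt_const w x)).clm_apply hXd)))).add
      ((hT.clm_apply (hasFDerivAt_const w x)).mul
      (((hS.clm_apply hXd).clm_apply hYd).sub
        ((hS.clm_apply hYd).clm_apply hXd)))
  have h0 := hd.unique ((hasFDerivAt_const (0:ℝ) x).congr_of_eventuallyEq ?_)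
  · have hs := congrFun (congrArg DFunLike.coe h0) s
    simp only [ContinuousLinearMap.add_apply, ContinuousLinearMap.coe_sub',
      ContinuousLinearMap.coe_comp', Function.comp_apply, ContinuousLinearMap.flip_apply,
      ContinuousLinearMap.smul_apply, smul_eq_mul, Pi.sub_apply,
      ContinuousLinearMap.zero_apply, ContinuousLinearMap.coe_smul', Pi.smul_apply,
      ContinuousLinearMap.sub_apply, map_zero] at hs
    rw [hT.fderiv] at hs
    simp only [dOne, hT.fderiv]
    linear_combination hs
  · filter_upwards [hvan] with y hy
    simpa [tdt, dOne] using hy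

end SDSugra

open SDSugra

set_option maxHeartbeats 4000000 in
/-- the kernel of `τ ∧ dτ` is involutive (closed under Lie bracket). -/
theorem lie_bracket_mem_kernel
    (E : Type*) [NormedAddCommGroup E] [NormedSpace ℝ E] [FiniteDimensional ℝ E]
    (U : Set E) (hU : IsOpen U)
    (τ : E → E →L[ℝ] ℝ) (X Y : E → E)
    (hτ : ContDiffOn ℝ (⊤ : ℕ∞) τ U) (hX : ContDiffOn ℝ (⊤ : ℕ∞) X U) (hY : ContDiffOn ℝ (⊤ : ℕ∞) Y U)
    (hne : ∀ x ∈ U, ∃ u v w : E, tdt τ x u v w ≠ 0)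
    (hXker : ∀ x ∈ U, ∀ v w : E, tdt τ x (X x) v w = 0)
    (hYker : ∀ x ∈ U, ∀ v w : E, tdt τ x (Y x) v w = 0) :
    ∀ x ∈ U, τ x (lieB X Y x) = 0 ∧ ∀ v w : E, tdt τ x (lieB X Y x) v w = 0 := by
  -- first-order pointwise consequences on all of U
  have hX0 : ∀ y ∈ U, τ y (X y) = 0 := by
    intro y hy
    obtain ⟨u, v, w, huvw⟩ := hne y hy
    have key : τ y (X y) * tdt τ y u v w
        = τ y u * tdt τ y (X y) v w - τ y v * tdt τ y (X y) u w
          + τ y w * tdt τ y (X y) u v := by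
      simp only [tdt, dOne]; ring
    simp only [hXker y hy, mul_zero, sub_zero, add_zero] at key
    exact (mul_eq_zero.mp key).resolve_right huvw
  have hY0 : ∀ y ∈ U, τ y (Y y) = 0 := by
    intro y hy
    obtain ⟨u, v, w, huvw⟩ := hne y hy
    have key : τ y (Y y) * tdt τ y u v w
        = τ y u * tdt τ y (Y y) v w - τ y v * tdt τ y (Y y) u w
          + τ y w * tdt τ y (Y y) u v := by
      simp only [tdt, dOne]; ring
    simp only [hYker y hy, mul_zero, sub_zero, add_zero] at key
    exact (mul_eq_zero.mp key).resolve_right huvw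
  have hPX : ∀ y ∈ U, ∀ v w : E, τ y v * dOne τ y (X y) w = τ y w * dOne τ y (X y) v := by
    intro y hy v w
    have h := hXker y hy v w
    simp only [tdt, hX0 y hy, zero_mul] at h
    linarith
  have hPY : ∀ y ∈ U, ∀ v w : E, τ y v * dOne τ y (Y y) w = τ y w * dOne τ y (Y y) v := by
    intro y hy v w
    have h := hYker y hy v w
    simp only [tdt, hY0 y hy, zero_mul] at h
    linarith
  intro x hx
  have hUx : U ∈ nhds x := hU.mem_nhds hx
  have hτx : ContDiffAt ℝ (⊤ : ℕ∞) τ x := hτ.contDiffAt hUx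
  have hT : HasFDerivAt τ (fderiv ℝ τ x) x := (hτx.differentiableAt (by simp)).hasFDerivAt
  have hS : HasFDerivAt (fderiv ℝ τ) (fderiv ℝ (fderiv ℝ τ) x) x :=
    ((hτx.fderiv_right (m := 1) (WithTop.coe_le_coe.mpr le_top)).differentiableAt one_ne_zero).hasFDerivAt
  have hXd : HasFDerivAt X (fderiv ℝ X x) x :=
    (((hX.contDiffAt hUx)).differentiableAt (by simp)).hasFDerivAt
  have hYd : HasFDerivAt Y (fderiv ℝ Y x) x :=
    (((hY.contDiffAt hUx)).differentiableAt (by simp)).hasFDerivAt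
  have hsym : ∀ u v w : E, fderiv ℝ (fderiv ℝ τ) x u v w = fderiv ℝ (fderiv ℝ τ) x v u w :=
    fun u v w => congrFun (congrArg _ (hτx.isSymmSndFDerivAt (by rw [minSmoothness_of_isRCLikeNormedField]; exact WithTop.coe_le_coe.mpr le_top) u v)) w
  -- a vector where τ x does not vanish
  have he : ∃ e : E, τ x e ≠ 0 := by
    by_contra h
    push_neg at h
    obtain ⟨u, v, w, huvw⟩ := hne x hx
    exact huvw (by simp [tdt, h])
  obtain ⟨e, he⟩ := he
  set c : ℝ := dOne τ x (X x) e / τ x e with hc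
  set d : ℝ := dOne τ x (Y x) e / τ x e with hd
  have hca : ∀ u : E, dOne τ x (X x) u = c * τ x u := by
    intro u
    have h := hPX x hx e u
    rw [hc, div_mul_eq_mul_div, eq_div_iff he]
    linarith
  have hcb : ∀ u : E, dOne τ x (Y x) u = d * τ x u := by
    intro u
    have h := hPY x hx e u
    rw [hd, div_mul_eq_mul_div, eq_div_iff he]
    linarith
  have hA0 : τ x (X x) = 0 := hX0 x hx
  have hB0 : τ x (Y x) = 0 := hY0 x hx
  have hF : ∀ s : E, fderiv ℝ τ x s (X x) + τ x (fderiv ℝ X x s) = 0 :=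
    tau_deriv hT hXd (Filter.eventually_of_mem hUx fun y hy => hX0 y hy)
  have hG : ∀ s : E, fderiv ℝ τ x s (Y x) + τ x (fderiv ℝ Y x s) = 0 :=
    tau_deriv hT hYd (Filter.eventually_of_mem hUx fun y hy => hY0 y hy)
  constructor
  · -- τ x ([X,Y] x) = 0
    have h1 := hF (Y x)
    have h2 := hG (X x)
    have h3 := hca (Y x)
    rw [hB0, mul_zero] at h3
    simp only [dOne] at h3
    simp only [lieB, map_sub]
    linarith
  · -- ι_{[X,Y]}(τ ∧ dτ) = 0
    intro v w
    have H1 := phi_deriv hT hS hXd v w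
      (Filter.eventually_of_mem hUx fun y hy => hXker y hy v w) (Y x)
    have H2 := phi_deriv hT hS hYd v w
      (Filter.eventually_of_mem hUx fun y hy => hYker y hy v w) (X x)
    have H3v := theta_deriv hT hS hXd hYd w
      (Filter.eventually_of_mem hUx fun y hy => hXker y hy (Y y) w) v
    have H3w := theta_deriv hT hS hXd hYd v
      (Filter.eventually_of_mem hUx fun y hy => hXker y hy (Y y) v) w
    have hYk_pv := hYker x hx (fderiv ℝ X x v) w
    have hYk_pw := hYker x hx (fderiv ℝ X x w) v
    have hXk_qv := hXker x hx (fderiv ℝ Y x v) w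
    have hXk_qw := hXker x hx (fderiv ℝ Y x w) v
    have hca_v := hca v; have hca_w := hca w; have hca_b := hca (Y x)
    have hcb_v := hcb v; have hcb_w := hcb w
    simp only [tdt, dOne] at H1 H2 H3v H3w hYk_pv hYk_pw hXk_qv hXk_qw hca_v hca_w hca_b hcb_v hcb_w ⊢
    simp only [lieB, map_sub, ContinuousLinearMap.sub_apply]
    linear_combination H2 - H1 + H3v + hYk_pv - hXk_qv - H3w - hYk_pw + hXk_qw
      - 2 * (fderiv ℝ τ x v w - fderiv ℝ τ x w v) * hca_b
      - 2 * c * (fderiv ℝ τ x v w - fderiv ℝ τ x w v) * hB0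
      + 2 * (fderiv ℝ τ x (Y x) w - fderiv ℝ τ x w (Y x)) * hca_v
      + 2 * c * (τ x v) * hcb_w
      - 2 * (fderiv ℝ τ x (Y x) v - fderiv ℝ τ x v (Y x)) * hca_w
      - 2 * c * (τ x w) * hcb_v
      - τ x (X x) * (hsym v (Y x) w + hsym (Y x) w v + hsym w v (Y x))
      - τ x (Y x) * (hsym (X x) v w + hsym v w (X x) + hsym w (X x) v)
      - τ x v * (hsym (Y x) (X x) w + hsym (X x) w (Y x) + hsym w (Y x) (X x))
      - τ x w * (hsym (X x) (Y x) v + hsym v (X x) (Y x) + hsym (Y x) v (X x))
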